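/- Let V be a finite-dimensional real normed vector space, γ ⊆ V a closed proper convex cone with nonempty interior, v an element of the interior of γ^a = −γ, and B_v := (v + γ) ∩ (−v + γ^a). Then the gauge of B_v is a norm on V whose closed unit ball is B_v; precisely, for all x, y ∈ V and c ∈ ℝ: gauge_{B_v}(x) ≥ 0; gauge_{B_v}(x) = 0 if and only if x = 0; gauge_{B_v}(c • x) = |c| · gauge_{B_v}(x); gauge_{B_v}(x + y) ≤ gauge_{B_v}(x) + gauge_{B_v}(y); and {x ∈ V : gauge_{B_v}(x) ≤ 1} = B_v. -/

import Mathlib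

/-!
`B_v` is the order interval `{x | -w ≤ x ≤ w}` for `w = -v` in the order defined by `γ`. It is
convex, symmetric, closed, and a neighbourhood of `0` because `w` is interior to `γ`; the gauge of
such a set is a seminorm whose closed unit ball is the set itself. It is a norm because `B_v` is
bounded: if `xₙ ∈ B_v` with `‖xₙ‖ → ∞`, a limit `u` of the directions `xₙ / ‖xₙ‖` lies in both
`γ` and `-γ`, as the cone is closed, so `u = 0`, contradicting `‖u‖ = 1`.
-/

open Pointwise Filter Topology

/-- The set `B_v = (v + γ) ∩ (-v + γ^a)` where `γ^a = -γ`. -/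
def coneBall {V : Type*} [AddGroup V] (γ : Set V) (v : V) : Set V :=
  (v +ᵥ γ) ∩ ((-v) +ᵥ (-γ))

section AddCommGroup

variable {V : Type*} [AddCommGroup V] {γ : Set V} {v x : V}

theorem mem_coneBall_iff : x ∈ coneBall γ v ↔ -v + x ∈ γ ∧ -v + -x ∈ γ := by
  simp only [coneBall, Set.mem_inter_iff, Set.mem_vadd_set_iff_neg_vadd_mem, vadd_eq_add,
    Set.mem_neg, neg_neg, neg_add_rev, add_comm (-x)]

theorem neg_mem_coneBall (hx : x ∈ coneBall γ v) : -x ∈ coneBall γ v := by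
  rw [mem_coneBall_iff, neg_neg] at *
  exact hx.symm

theorem Convex.coneBall {𝕜 : Type*} [Field 𝕜] [LinearOrder 𝕜] [IsStrictOrderedRing 𝕜]
    [Module 𝕜 V] (hγ : Convex 𝕜 γ) (v : V) : Convex 𝕜 (coneBall γ v) :=
  (hγ.vadd v).inter (hγ.neg.vadd (-v))

variable [TopologicalSpace V] [IsTopologicalAddGroup V]

theorem IsClosed.coneBall (hγ : IsClosed γ) (v : V) : IsClosed (coneBall γ v) :=
  (hγ.vadd v).inter (hγ.neg.vadd (-v))

theorem coneBall_mem_nhds_zero (hv : v ∈ interior (-γ)) : coneBall γ v ∈ 𝓝 (0 : V) := by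
  have hv' : -γ ∈ 𝓝 v := mem_interior_iff_mem_nhds.1 hv
  have hv'' : γ ∈ 𝓝 (-v) := by rwa [nhds_neg, Filter.mem_neg]
  refine inter_mem ?_ ?_
  · simpa using vadd_mem_nhds_vadd v hv''
  · simpa using vadd_mem_nhds_vadd (-v) hv'

end AddCommGroup

section NormedSpace

variable {V : Type*} [NormedAddCommGroup V] [NormedSpace ℝ V] {γ : Set V}

theorem IsClosed.mem_of_tendsto_normalize {ι : Type*} {l : Filter ι} [l.NeBot]
    (hclosed : IsClosed γ) (hsmul : ∀ t : ℝ, 0 < t → t • γ ⊆ γ) {a u : V} {x : ι → V}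
    (hx : ∀ i, a + x i ∈ γ) (hnorm : Tendsto (fun i ↦ ‖x i‖) l atTop)
    (hdir : Tendsto (fun i ↦ ‖x i‖⁻¹ • x i) l (𝓝 u)) : u ∈ γ := by
  have hlim : Tendsto (fun i ↦ ‖x i‖⁻¹ • (a + x i)) l (𝓝 u) := by
    simpa [smul_add] using (hnorm.inv_tendsto_atTop.smul_const a).add hdir
  refine hclosed.mem_of_tendsto hlim ?_
  filter_upwards [hnorm.eventually_gt_atTop 0] with i hi
  exact hsmul _ (inv_pos.2 hi) (Set.smul_mem_smul_set (hx i))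

theorem isBounded_coneBall [FiniteDimensional ℝ V] (hclosed : IsClosed γ)
    (hsmul : ∀ t : ℝ, 0 < t → t • γ ⊆ γ) (hproper : γ ∩ (-γ) = {0}) (v : V) :
    Bornology.IsBounded (coneBall γ v) := by
  by_contra hunb
  rw [isBounded_iff_forall_norm_le] at hunb
  push Not at hunb
  choose x hxB hxn using fun n : ℕ ↦ hunb n
  have hx0 : ∀ n, 0 < ‖x n‖ := fun n ↦ (Nat.cast_nonneg n).trans_lt (hxn n)
  have hsphere : ∀ n, ‖x n‖⁻¹ • x n ∈ Metric.sphere (0 : V) 1 := fun n ↦ by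
    simp [norm_smul, (hx0 n).ne']
  obtain ⟨u, hu, φ, hφ, hdir⟩ := (isCompact_sphere (0 : V) 1).tendsto_subseq hsphere
  have hnorm : Tendsto (fun n ↦ ‖x (φ n)‖) atTop atTop :=
    tendsto_atTop_mono (fun n ↦ ((Nat.cast_le.2 hφ.le_apply).trans (hxn (φ n)).le))
      tendsto_natCast_atTop_atTop
  have hpos : u ∈ γ := hclosed.mem_of_tendsto_normalize hsmul
    (fun n ↦ (mem_coneBall_iff.1 (hxB (φ n))).1) hnorm hdir
  have hneg : -u ∈ γ := hclosed.mem_of_tendsto_normalize hsmul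
    (fun n ↦ (mem_coneBall_iff.1 (hxB (φ n))).2) (by simpa using hnorm)
    (by simpa using hdir.neg)
  have hu0 : u ∈ ({0} : Set V) := hproper ▸ ⟨hpos, Set.mem_neg.2 hneg⟩
  simp [Set.mem_singleton_iff.1 hu0] at hu

end NormedSpace

theorem gauge_coneBall_is_norm_general
    {V : Type*} [NormedAddCommGroup V] [NormedSpace ℝ V] [FiniteDimensional ℝ V]
    (γ : Set V)
    (hsmul : ∀ t : ℝ, 0 < t → t • γ ⊆ γ)
    (hconv : Convex ℝ γ)
    (hproper : γ ∩ (-γ) = {0})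
    (hclosed : IsClosed γ)
    (v : V) (hv : v ∈ interior (-γ)) :
    (∀ x : V, 0 ≤ gauge (coneBall γ v) x) ∧
    (∀ x : V, gauge (coneBall γ v) x = 0 ↔ x = 0) ∧
    (∀ (c : ℝ) (x : V), gauge (coneBall γ v) (c • x) = |c| * gauge (coneBall γ v) x) ∧
    (∀ x y : V, gauge (coneBall γ v) (x + y) ≤ gauge (coneBall γ v) x + gauge (coneBall γ v) y) ∧
    {x : V | gauge (coneBall γ v) x ≤ 1} = coneBall γ v := by
  have hBconv := hconv.coneBall v
  have hBnhds := coneBall_mem_nhds_zero hv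
  have hBabs : Absorbent ℝ (coneBall γ v) := absorbent_nhds_zero hBnhds
  have hBbal : Balanced ℝ (coneBall γ v) :=
    (balanced_iff_neg_mem hBconv).2 fun _ ↦ neg_mem_coneBall
  have hBbdd : Bornology.IsVonNBounded ℝ (coneBall γ v) :=
    (NormedSpace.isVonNBounded_iff ℝ).2 (isBounded_coneBall hclosed hsmul hproper v)
  refine ⟨gauge_nonneg, fun x ↦ gauge_eq_zero hBabs hBbdd,
    fun c x ↦ by rw [gauge_smul hBbal, Real.norm_eq_abs], gauge_add_le hBconv hBabs, ?_⟩
  ext x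
  rw [Set.mem_ofPred_eq, gauge_le_one_iff_mem_closure hBconv hBnhds,
    (hclosed.coneBall v).closure_eq]

/-- the gauge (Minkowski functional) of `B_v = (v + γ) ∩ (-v + γ^a)` is a
norm on `V` whose closed unit ball is `B_v`. -/
theorem gauge_coneBall_is_norm
    {V : Type*} [NormedAddCommGroup V] [NormedSpace ℝ V] [FiniteDimensional ℝ V]
    (γ : Set V) (hzero : (0 : V) ∈ γ)
    (hsmul : ∀ t : ℝ, 0 < t → t • γ ⊆ γ)
    (hconv : Convex ℝ γ)
    (hproper : γ ∩ (-γ) = {0})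
    (hclosed : IsClosed γ)
    (hint : (interior γ).Nonempty)
    (v : V) (hv : v ∈ interior (-γ)) :
    (∀ x : V, 0 ≤ gauge (coneBall γ v) x) ∧
    (∀ x : V, gauge (coneBall γ v) x = 0 ↔ x = 0) ∧
    (∀ (c : ℝ) (x : V), gauge (coneBall γ v) (c • x) = |c| * gauge (coneBall γ v) x) ∧
    (∀ x y : V, gauge (coneBall γ v) (x + y) ≤ gauge (coneBall γ v) x + gauge (coneBall γ v) y) ∧
    {x : V | gauge (coneBall γ v) x ≤ 1} = coneBall γ v :=
  gauge_coneBall_is_norm_general γ hsmul hconv hproper hclosed v hv
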